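/- Let K be a number field such that for some constant ρ_K and exponent θ ∈ (0,1), N_K(y) = ρ_K y + O(y^{1−θ}) as y → ∞. Then for every integer m ≥ 2, the number of m-tuples of pairwise-generating ideals, #{(𝔞₁,…,𝔞_m) : N𝔞_i ≤ x for all i, 𝔞₁+⋯+𝔞_m = O_K}, equals N_K(x)^m/ζ_K(m) + O_{K,m,ε}(x^{m−θ+ε}). -/

import Mathlib

open NumberField Ideal Filter

/-- `NKcount K y` is the number of nonzero integral ideals of `𝓞 K` of norm at most `y`. -/
noncomputable def NKcount (K : Type) [Field K] [NumberField K] (y : ℝ) : ℕ :=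
  Set.ncard {I : Ideal (𝓞 K) | I ≠ 0 ∧ (absNorm I : ℝ) ≤ y}

/-- The Dedekind zeta function of `K` at a real argument `s > 1`. -/
noncomputable def zetaK (K : Type) [Field K] [NumberField K] (s : ℝ) : ℝ :=
  ∑' I : {I : Ideal (𝓞 K) // I ≠ 0}, (absNorm I.1 : ℝ) ^ (-s)

/-!
A tuple of nonzero ideals is jointly coprime iff no prime ideal contains all of its entries, so
by inclusion–exclusion over finite sets `Q` of primes (Möbius inversion over the squarefree ideals
`𝔠 = ∏ Q`) the number of such tuples with norms at most `x` is
`∑_𝔠 μ(𝔠) N_K(x / N𝔠)^m`. Replacing `N_K(y)^m` by `(ρ y)^m` costs `O(y^{m-θ})` per term, and the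
resulting errors `x^{m-θ} ∑_𝔠 N𝔠^{-(m-θ)}` converge because `m - θ > 1`; no tail estimate is needed,
because `N_K(x / N𝔠) = 0` as soon as `N𝔠 > x`. The main term is then `(ρ x)^m ∑_𝔠 μ(𝔠) N𝔠^{-m}`,
which differs from `N_K(x)^m / ζ_K(m)` by `O(x^{m-θ})`, the Dirichlet series of `μ` being `1 / ζ_K`.
-/

open IsDedekindDomain Asymptotics

theorem summable_rpow_neg_of_card_le_mul {ι : Type*} (ν : ι → ℕ) (hν : ∀ i, ν i ≠ 0) {C : ℝ}
    (hC : ∀ (u : Finset ι) (n : ℕ), (∀ i ∈ u, ν i ≤ n) → (u.card : ℝ) ≤ C * n) {s : ℝ}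
    (hs : 1 < s) : Summable fun i ↦ (ν i : ℝ) ^ (-s) := by
  classical
  have hC0 : 0 ≤ C := by simpa using hC ∅ 1
  set r : ℝ := 2 * 2 ^ (-s) with hr
  have hr1 : r < 1 := by
    have : (2 : ℝ) ^ (-s) < 2 ^ (-1 : ℝ) :=
      Real.rpow_lt_rpow_of_exponent_lt one_lt_two (by linarith)
    rw [Real.rpow_neg_one] at this
    linarith
  have hblock : ∀ (u : Finset ι) (k : ℕ),
      ∑ i ∈ u with Nat.log 2 (ν i) = k, (ν i : ℝ) ^ (-s) ≤ 2 * C * r ^ k := by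
    intro u k
    have hcard : ((u.filter fun i ↦ Nat.log 2 (ν i) = k).card : ℝ) ≤ C * (2 ^ (k + 1) : ℕ) := by
      refine hC _ _ fun i hi ↦ ?_
      rw [← (Finset.mem_filter.mp hi).2]
      exact (Nat.lt_pow_succ_log_self one_lt_two _).le
    calc ∑ i ∈ u with Nat.log 2 (ν i) = k, (ν i : ℝ) ^ (-s)
        ≤ ∑ i ∈ u with Nat.log 2 (ν i) = k, ((2 : ℝ) ^ k) ^ (-s) := by
          refine Finset.sum_le_sum fun i hi ↦ Real.rpow_le_rpow_of_nonpos (by positivity) ?_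
            (by linarith)
          rw [← (Finset.mem_filter.mp hi).2]
          exact_mod_cast Nat.pow_log_le_self 2 (hν i)
      _ ≤ C * (2 ^ (k + 1) : ℕ) * ((2 : ℝ) ^ k) ^ (-s) := by
          rw [Finset.sum_const, nsmul_eq_mul]
          gcongr
      _ = 2 * C * r ^ k := by
          rw [hr, mul_pow, Real.rpow_pow_comm zero_le_two]
          push_cast
          ring
  refine summable_of_sum_le (c := 2 * C * (1 - r)⁻¹) (fun i ↦ by positivity) fun u ↦ ?_
  calc ∑ i ∈ u, (ν i : ℝ) ^ (-s)
      = ∑ k ∈ u.image (Nat.log 2 ∘ ν), ∑ i ∈ u with Nat.log 2 (ν i) = k, (ν i : ℝ) ^ (-s) :=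
        (Finset.sum_fiberwise_of_maps_to (fun i hi ↦ Finset.mem_image_of_mem _ hi) _).symm
    _ ≤ ∑ k ∈ u.image (Nat.log 2 ∘ ν), 2 * C * r ^ k := Finset.sum_le_sum fun k _ ↦ hblock u k
    _ ≤ 2 * C * (1 - r)⁻¹ := by
        rw [← Finset.mul_sum, ← tsum_geometric_of_lt_one (by positivity) hr1]
        gcongr
        exact Summable.sum_le_tsum _ (fun k _ ↦ by positivity)
          (summable_geometric_of_lt_one (by positivity) hr1)

namespace IsDedekindDomain.HeightOneSpectrum

variable {R : Type*} [CommRing R]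

/-- The squarefree ideal with set of prime factors `Q`; its Möbius value is `(-1) ^ #Q`. -/
def primeProd (Q : Finset (HeightOneSpectrum R)) : Ideal R := ∏ v ∈ Q, v.asIdeal

theorem primeProd_ne_zero [IsDomain R] (Q : Finset (HeightOneSpectrum R)) : primeProd Q ≠ 0 :=
  Finset.prod_ne_zero_iff.mpr fun v _ ↦ v.ne_bot

theorem primeProd_dvd_iff [IsDedekindDomain R] {Q : Finset (HeightOneSpectrum R)} {J : Ideal R} :
    primeProd Q ∣ J ↔ ∀ v ∈ Q, J ≤ v.asIdeal := by
  simp only [← Ideal.dvd_iff_le]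
  refine ⟨fun h v hv ↦ (Finset.dvd_prod_of_mem _ hv).trans h, fun h ↦ ?_⟩
  have hmap : primeProd Q = ∏ p ∈ Q.map ⟨_, asIdeal_injective⟩, p := by
    rw [Finset.prod_map]; rfl
  rw [hmap]
  refine Finset.prod_primes_dvd J ?_ ?_ <;>
    simp only [Finset.mem_map, Function.Embedding.coeFn_mk, forall_exists_index, and_imp,
      forall_apply_eq_imp_iff₂]
  exacts [fun v _ ↦ v.prime, h]

theorem primeProd_le_iff [IsDedekindDomain R] {Q : Finset (HeightOneSpectrum R)}
    {v : HeightOneSpectrum R} : primeProd Q ≤ v.asIdeal ↔ v ∈ Q := by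
  rw [primeProd, v.isPrime.prod_le]
  refine ⟨fun ⟨w, hw, hwv⟩ ↦ ?_, fun hv ↦ ⟨v, hv, le_rfl⟩⟩
  rwa [← HeightOneSpectrum.ext (w.isMaximal.eq_of_le v.isPrime.ne_top hwv)]

theorem primeProd_injective [IsDedekindDomain R] : Function.Injective (primeProd (R := R)) :=
  fun Q Q' h ↦ by
    ext v
    rw [← primeProd_le_iff, h, primeProd_le_iff]

theorem forall_not_le_asIdeal_iff [IsDedekindDomain R] {J : Ideal R} (hJ : J ≠ ⊥) :
    (∀ v : HeightOneSpectrum R, ¬J ≤ v.asIdeal) ↔ J = ⊤ := by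
  refine ⟨fun h ↦ ?_, fun h v hv ↦ v.isPrime.ne_top (top_le_iff.mp (h ▸ hv))⟩
  by_contra hJ_top
  obtain ⟨M, hM, hJM⟩ := J.exists_le_maximal hJ_top
  exact h ⟨M, hM.isPrime, fun hM0 ↦ hJ (le_bot_iff.mp (hM0 ▸ hJM))⟩ hJM

open scoped Classical in
theorem sum_powerset_ite_primeProd_dvd [IsDedekindDomain R] {A : Type*} [Ring A] {J : Ideal R}
    (hJ : J ≠ ⊥) {T : Finset (HeightOneSpectrum R)} (hT : ∀ v, J ≤ v.asIdeal → v ∈ T) :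
    ∑ Q ∈ T.powerset, (if primeProd Q ∣ J then (-1 : A) ^ Q.card else 0) =
      if J = ⊤ then 1 else 0 := by
  have hfilter : T.powerset.filter (primeProd · ∣ J) = (T.filter (J ≤ ·.asIdeal)).powerset := by
    ext Q
    simp only [Finset.mem_filter, Finset.mem_powerset, primeProd_dvd_iff, Finset.subset_iff]
    exact ⟨fun ⟨h₁, h₂⟩ v hv ↦ ⟨h₁ hv, h₂ v hv⟩, fun h ↦ ⟨fun v hv ↦ (h hv).1, fun v hv ↦ (h hv).2⟩⟩
  have hempty : T.filter (J ≤ ·.asIdeal) = ∅ ↔ J = ⊤ := by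
    rw [Finset.filter_eq_empty_iff, ← forall_not_le_asIdeal_iff hJ]
    exact ⟨fun h v hv ↦ h (hT v hv) hv, fun h v _ ↦ h v⟩
  have hsum := congrArg (Int.cast : ℤ → A)
    (Finset.sum_powerset_neg_one_pow_card (x := T.filter (J ≤ ·.asIdeal)))
  push_cast at hsum
  rw [← Finset.sum_filter, hfilter, hsum]
  exact if_congr hempty rfl rfl

end IsDedekindDomain.HeightOneSpectrum

open HeightOneSpectrum

section AbsNorm

variable {S : Type*} [CommRing S] [IsDedekindDomain S] [Module.Free ℤ S] [Module.Finite ℤ S]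

theorem one_le_absNorm {I : Ideal S} (hI : I ≠ 0) : (1 : ℝ) ≤ absNorm I := by
  exact_mod_cast Nat.one_le_iff_ne_zero.mpr (absNorm_eq_zero_iff.not.mpr hI)

theorem absNorm_le_absNorm_of_le {I J : Ideal S} (hJ : J ≠ 0) (h : J ≤ I) :
    absNorm I ≤ absNorm J :=
  Nat.le_of_dvd (Nat.pos_of_ne_zero (absNorm_eq_zero_iff.not.mpr hJ))
    (absNorm_dvd_absNorm_of_le h)

theorem finite_setOf_ne_zero_absNorm_le [CharZero S] (x : ℝ) :
    {I : Ideal S | I ≠ 0 ∧ (absNorm I : ℝ) ≤ x}.Finite :=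
  (Ideal.finite_setOfPred_absNorm_le ⌊x⌋₊).subset fun _ ⟨_, h⟩ ↦ Nat.le_floor h

end AbsNorm

section Counting

variable {K : Type} [Field K] [NumberField K]

variable (K) in
noncomputable def idealsUpTo (x : ℝ) : Finset (Ideal (𝓞 K)) :=
  (finite_setOf_ne_zero_absNorm_le x).toFinset

theorem mem_idealsUpTo {x : ℝ} {I : Ideal (𝓞 K)} :
    I ∈ idealsUpTo K x ↔ I ≠ 0 ∧ (absNorm I : ℝ) ≤ x :=
  Set.Finite.mem_toFinset _

theorem NKcount_eq_card (x : ℝ) : NKcount K x = (idealsUpTo K x).card :=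
  Set.ncard_eq_toFinset_card _ _

theorem NKcount_eq_zero_of_lt_one {x : ℝ} (hx : x < 1) : NKcount K x = 0 := by
  rw [NKcount_eq_card, Finset.card_eq_zero, Finset.eq_empty_iff_forall_notMem]
  intro I hI
  obtain ⟨hI0, hIx⟩ := mem_idealsUpTo.mp hI
  linarith [one_le_absNorm hI0]

open scoped Classical in
theorem card_filter_dvd_idealsUpTo {c : Ideal (𝓞 K)} (hc : c ≠ 0) (x : ℝ) :
    ((idealsUpTo K x).filter (c ∣ ·)).card = NKcount K (x / absNorm c) := by
  have hc₁ : (0 : ℝ) < absNorm c := zero_lt_one.trans_le (one_le_absNorm hc)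
  rw [NKcount_eq_card]
  refine (Finset.card_nbij (c * ·) (fun b hb ↦ ?_) (fun b _ b' _ ↦ mul_left_cancel₀ hc)
    fun a ha ↦ ?_).symm
  · obtain ⟨hb0, hbx⟩ := mem_idealsUpTo.mp hb
    refine Finset.mem_filter.mpr ⟨mem_idealsUpTo.mpr ⟨mul_ne_zero hc hb0, ?_⟩, dvd_mul_right c b⟩
    rw [map_mul, Nat.cast_mul, ← le_div_iff₀' hc₁]
    exact hbx
  · obtain ⟨ha, b, rfl⟩ := Finset.mem_filter.mp ha
    obtain ⟨hcb0, hcbx⟩ := mem_idealsUpTo.mp ha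
    refine ⟨b, mem_idealsUpTo.mpr ⟨right_ne_zero_of_mul hcb0, ?_⟩, rfl⟩
    rwa [map_mul, Nat.cast_mul, ← le_div_iff₀' hc₁] at hcbx

variable (K) in
noncomputable def primesUpTo (x : ℝ) : Finset (HeightOneSpectrum (𝓞 K)) :=
  (idealsUpTo K x).preimage asIdeal asIdeal_injective.injOn

theorem mem_primesUpTo {x : ℝ} {v : HeightOneSpectrum (𝓞 K)} :
    v ∈ primesUpTo K x ↔ (absNorm v.asIdeal : ℝ) ≤ x := by
  rw [primesUpTo, Finset.mem_preimage, mem_idealsUpTo]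
  exact and_iff_right v.ne_bot

variable (K) in
def coprimeTuples (m : ℕ) (x : ℝ) : Set (Fin m → Ideal (𝓞 K)) :=
  {f | (∀ i, f i ≠ 0 ∧ (absNorm (f i) : ℝ) ≤ x) ∧ (⨆ i, f i) = ⊤}

theorem ncard_coprimeTuples_eq_sum {m : ℕ} (hm : m ≠ 0) (x : ℝ) :
    ((coprimeTuples K m x).ncard : ℝ) =
      ∑ Q ∈ (primesUpTo K x).powerset,
        (-1) ^ Q.card * (NKcount K (x / absNorm (primeProd Q)) : ℝ) ^ m := by
  classical
  set box := Fintype.piFinset fun _ : Fin m ↦ idealsUpTo K x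
  have hset : coprimeTuples K m x = ↑(box.filter fun f ↦ (⨆ i, f i) = ⊤) := by
    ext f
    simp [coprimeTuples, box, mem_idealsUpTo]
  have hmoebius : ∀ f ∈ box, (if (⨆ i, f i) = ⊤ then (1 : ℝ) else 0) =
      ∑ Q ∈ (primesUpTo K x).powerset, if primeProd Q ∣ ⨆ i, f i then (-1) ^ Q.card else 0 := by
    intro f hf
    let i₀ : Fin m := ⟨0, Nat.pos_of_ne_zero hm⟩
    obtain ⟨hf₀, hf₀x⟩ := mem_idealsUpTo.mp (Fintype.mem_piFinset.mp hf i₀)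
    refine (sum_powerset_ite_primeProd_dvd (fun h ↦ hf₀ (le_bot_iff.mp (h ▸ le_iSup f i₀)))
      fun v hv ↦ mem_primesUpTo.mpr (le_trans ?_ hf₀x)).symm
    exact_mod_cast absNorm_le_absNorm_of_le hf₀ ((le_iSup f i₀).trans hv)
  have hmultiples : ∀ Q : Finset (HeightOneSpectrum (𝓞 K)),
      (box.filter fun f ↦ primeProd Q ∣ ⨆ i, f i).card =
        NKcount K (x / absNorm (primeProd Q)) ^ m := by
    intro Q
    have : (box.filter fun f ↦ primeProd Q ∣ ⨆ i, f i) =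
        Fintype.piFinset fun _ ↦ (idealsUpTo K x).filter (primeProd Q ∣ ·) := by
      ext f
      simp [box, Ideal.dvd_iff_le, forall_and]
    rw [this, Fintype.card_piFinset_const, card_filter_dvd_idealsUpTo (primeProd_ne_zero Q)]
  rw [hset, Set.ncard_coe_finset, Finset.card_filter, Nat.cast_sum]
  push_cast
  rw [Finset.sum_congr rfl hmoebius, Finset.sum_comm]
  refine Finset.sum_congr rfl fun Q _ ↦ ?_
  rw [← Finset.sum_filter, Finset.sum_const, nsmul_eq_mul, hmultiples, mul_comm]
  push_cast
  rfl

theorem NKcount_div_absNorm_primeProd_eq_zero {x : ℝ} {Q : Finset (HeightOneSpectrum (𝓞 K))}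
    (hQ : Q ∉ (primesUpTo K x).powerset) : NKcount K (x / absNorm (primeProd Q)) = 0 := by
  obtain ⟨v, hvQ, hvx⟩ := Finset.not_subset.mp (mt Finset.mem_powerset.mpr hQ)
  have hv : (absNorm v.asIdeal : ℝ) ≤ absNorm (primeProd Q) := by
    exact_mod_cast absNorm_le_absNorm_of_le (primeProd_ne_zero Q) (primeProd_le_iff.mpr hvQ)
  apply NKcount_eq_zero_of_lt_one
  rw [div_lt_one (zero_lt_one.trans_le (one_le_absNorm (primeProd_ne_zero Q)))]
  exact (not_le.mp (mt mem_primesUpTo.mpr hvx)).trans_le hv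

theorem hasSum_ncard_coprimeTuples {m : ℕ} (hm : m ≠ 0) (x : ℝ) :
    HasSum (fun Q : Finset (HeightOneSpectrum (𝓞 K)) ↦
      (-1) ^ Q.card * (NKcount K (x / absNorm (primeProd Q)) : ℝ) ^ m)
      ((coprimeTuples K m x).ncard) := by
  rw [ncard_coprimeTuples_eq_sum hm]
  exact hasSum_sum_of_ne_finset_zero fun Q hQ ↦ by
    rw [NKcount_div_absNorm_primeProd_eq_zero hQ, Nat.cast_zero, zero_pow hm, mul_zero]

end Counting

section DirichletSeries

variable {K : Type} [Field K] [NumberField K]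

open scoped Classical in
theorem tsum_ite_primeProd_dvd {J : Ideal (𝓞 K)} (hJ : J ≠ 0) :
    ∑' Q : Finset (HeightOneSpectrum (𝓞 K)),
      (if primeProd Q ∣ J then (-1 : ℝ) ^ Q.card else 0) = if J = ⊤ then 1 else 0 := by
  have hT : ∀ v : HeightOneSpectrum (𝓞 K), J ≤ v.asIdeal → v ∈ primesUpTo K (absNorm J) :=
    fun v hv ↦ mem_primesUpTo.mpr (by exact_mod_cast absNorm_le_absNorm_of_le hJ hv)
  rw [tsum_eq_sum (s := (primesUpTo K (absNorm J)).powerset) fun Q hQ ↦ if_neg fun hdvd ↦ hQ ?_]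
  · exact sum_powerset_ite_primeProd_dvd hJ hT
  · exact Finset.mem_powerset.mpr fun v hv ↦ hT v (primeProd_dvd_iff.mp hdvd v hv)

theorem summable_absNorm_primeProd_rpow_neg {s : ℝ}
    (hs : Summable fun I : {I : Ideal (𝓞 K) // I ≠ 0} ↦ (absNorm I.1 : ℝ) ^ (-s)) :
    Summable fun Q : Finset (HeightOneSpectrum (𝓞 K)) ↦ (absNorm (primeProd Q) : ℝ) ^ (-s) :=
  hs.comp_injective
    (i := fun Q ↦ (⟨primeProd Q, primeProd_ne_zero Q⟩ : {I : Ideal (𝓞 K) // I ≠ 0}))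
    fun _ _ h ↦ primeProd_injective (congrArg Subtype.val h)

variable (K) in
def mulPrimeProd (p : {I : Ideal (𝓞 K) // I ≠ 0} × Finset (HeightOneSpectrum (𝓞 K))) :
    {I : Ideal (𝓞 K) // I ≠ 0} :=
  ⟨p.1.1 * primeProd p.2, mul_ne_zero p.1.2 (primeProd_ne_zero _)⟩

-- The fibre of `mulPrimeProd` over `J` is parametrised by the sets `Q` with `primeProd Q ∣ J`.
theorem tsum_fiber_mulPrimeProd (J : {I : Ideal (𝓞 K) // I ≠ 0}) :
    ∑' b : mulPrimeProd K ⁻¹' {J}, (-1 : ℝ) ^ b.1.2.card = if J.1 = ⊤ then 1 else 0 := by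
  classical
  have hval : ∀ b : mulPrimeProd K ⁻¹' {J}, J.1 = b.1.1.1 * primeProd b.1.2 := fun b ↦
    (congrArg Subtype.val (Set.mem_singleton_iff.mp b.2)).symm
  have hinj : Function.Injective fun b : mulPrimeProd K ⁻¹' {J} ↦ b.1.2 := by
    rintro b b' (h : b.1.2 = b'.1.2)
    have : b.1.1.1 * primeProd b.1.2 = b'.1.1.1 * primeProd b.1.2 := by rw [← hval, h, ← hval]
    exact Subtype.ext (Prod.ext (Subtype.ext (mul_right_cancel₀ (primeProd_ne_zero _) this)) h)
  have hrange : Function.support (fun Q ↦ if primeProd Q ∣ J.1 then (-1 : ℝ) ^ Q.card else 0) ⊆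
      Set.range fun b : mulPrimeProd K ⁻¹' {J} ↦ b.1.2 := by
    intro Q hQ
    obtain ⟨I, hI⟩ : primeProd Q ∣ J.1 := by
      by_contra h
      exact hQ (if_neg h)
    have hI0 : I ≠ 0 := right_ne_zero_of_mul (hI ▸ J.2)
    exact ⟨⟨(⟨I, hI0⟩, Q), Subtype.ext (hI.trans (mul_comm _ _)).symm⟩, rfl⟩
  rw [← tsum_ite_primeProd_dvd J.2, ← hinj.tsum_eq hrange]
  exact tsum_congr fun b ↦ (if_pos ⟨b.1.1.1, by rw [hval, mul_comm]⟩).symm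

variable (K) in
noncomputable def moebiusSeries (s : ℝ) : ℝ :=
  ∑' Q : Finset (HeightOneSpectrum (𝓞 K)), (-1) ^ Q.card * (absNorm (primeProd Q) : ℝ) ^ (-s)

theorem zetaK_mul_moebiusSeries {s : ℝ}
    (hs : Summable fun I : {I : Ideal (𝓞 K) // I ≠ 0} ↦ (absNorm I.1 : ℝ) ^ (-s)) :
    zetaK K s * moebiusSeries K s = 1 := by
  classical
  set F := fun I : {I : Ideal (𝓞 K) // I ≠ 0} ↦ (absNorm I.1 : ℝ) ^ (-s)
  set W := fun Q : Finset (HeightOneSpectrum (𝓞 K)) ↦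
    (-1) ^ Q.card * (absNorm (primeProd Q) : ℝ) ^ (-s)
  have hF : Summable fun I ↦ ‖F I‖ := by
    simpa [F, Real.norm_eq_abs, abs_of_nonneg (Real.rpow_nonneg (Nat.cast_nonneg _) _)] using hs
  have hW : Summable fun Q ↦ ‖W Q‖ := by
    simpa [W, Real.norm_eq_abs, abs_of_nonneg (Real.rpow_nonneg (Nat.cast_nonneg _) _)] using
      summable_absNorm_primeProd_rpow_neg hs
  have hfiber : ∀ J, ∑' b : mulPrimeProd K ⁻¹' {J}, F b.1.1 * W b.1.2 =
      if J = ⟨⊤, top_ne_bot⟩ then 1 else 0 := by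
    intro J
    have hterm : ∀ b : mulPrimeProd K ⁻¹' {J},
        F b.1.1 * W b.1.2 = (absNorm J.1 : ℝ) ^ (-s) * (-1) ^ b.1.2.card := fun b ↦ by
      have hJ : J.1 = b.1.1.1 * primeProd b.1.2 :=
        (congrArg Subtype.val (Set.mem_singleton_iff.mp b.2)).symm
      simp only [F, W, hJ, map_mul, Nat.cast_mul,
        Real.mul_rpow (Nat.cast_nonneg _) (Nat.cast_nonneg _)]
      ring
    rw [tsum_congr hterm, tsum_mul_left, tsum_fiber_mulPrimeProd]
    by_cases hJ : J.1 = ⊤ <;> simp [hJ, Subtype.ext_iff]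
  have hsum := (summable_mul_of_summable_norm hF hW).hasSum.tsum_fiberwise (mulPrimeProd K)
  simp only [hfiber] at hsum
  rw [zetaK, moebiusSeries, tsum_mul_tsum_of_summable_norm hF hW]
  exact hsum.unique (hasSum_ite_eq _ _)

end DirichletSeries

section Asymptotics

variable {K : Type} [Field K] [NumberField K] {θ ρ : ℝ}

theorem exists_abs_NKcount_sub_le (hθ0 : 0 ≤ θ) (hθ1 : θ ≤ 1)
    (hNK : (fun y : ℝ ↦ (NKcount K y : ℝ) - ρ * y) =O[atTop] fun y : ℝ ↦ y ^ (1 - θ)) :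
    ∃ C, ∀ y : ℝ, 0 < y → |(NKcount K y : ℝ) - ρ * y| ≤ C * y ^ (1 - θ) := by
  obtain ⟨c, hc⟩ := hNK.bound
  obtain ⟨y₀, hy₀⟩ := eventually_atTop.mp hc
  set B : ℝ := NKcount K y₀ + |ρ| * |y₀|
  refine ⟨|ρ| + B + |c|, fun y hy ↦ ?_⟩
  have hpow : 0 < y ^ (1 - θ) := Real.rpow_pos_of_pos hy _
  have hB : 0 ≤ B := by positivity
  suffices |(NKcount K y : ℝ) - ρ * y| ≤ |ρ| * y ^ (1 - θ) ∨
      |(NKcount K y : ℝ) - ρ * y| ≤ B * y ^ (1 - θ) ∨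
      |(NKcount K y : ℝ) - ρ * y| ≤ |c| * y ^ (1 - θ) by
    rcases this with h | h | h <;>
      refine h.trans (by gcongr; linarith [abs_nonneg ρ, abs_nonneg c])
  rcases lt_or_ge y 1 with hy1 | hy1
  · left
    rw [NKcount_eq_zero_of_lt_one hy1, Nat.cast_zero, zero_sub, abs_neg, abs_mul, abs_of_pos hy]
    gcongr
    simpa using Real.rpow_le_rpow_of_exponent_ge hy hy1.le (by linarith : 1 - θ ≤ 1)
  rcases lt_or_ge y y₀ with hyy₀ | hyy₀
  · right; left
    have hmono : NKcount K y ≤ NKcount K y₀ := by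
      simp only [NKcount_eq_card]
      exact Finset.card_le_card fun I hI ↦ mem_idealsUpTo.mpr
        ⟨(mem_idealsUpTo.mp hI).1, (mem_idealsUpTo.mp hI).2.trans hyy₀.le⟩
    calc |(NKcount K y : ℝ) - ρ * y| ≤ |(NKcount K y : ℝ)| + |ρ * y| := abs_sub _ _
      _ = NKcount K y + |ρ| * y := by rw [Nat.abs_cast, abs_mul, abs_of_pos hy]
      _ ≤ B := add_le_add (by exact_mod_cast hmono)
          (by gcongr; exact hyy₀.le.trans (le_abs_self _))
      _ ≤ B * y ^ (1 - θ) := le_mul_of_one_le_right hB (Real.one_le_rpow hy1 (by linarith))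
  · right; right
    simpa [Real.norm_eq_abs, abs_of_pos hpow] using (hy₀ y hyy₀).trans
      (mul_le_mul_of_nonneg_right (le_abs_self c) (norm_nonneg _))

theorem NKcount_le_mul_of_abs_sub_le (hθ0 : 0 ≤ θ) {C : ℝ}
    (hC : ∀ y : ℝ, 0 < y → |(NKcount K y : ℝ) - ρ * y| ≤ C * y ^ (1 - θ)) {y : ℝ} (hy : 0 ≤ y) :
    (NKcount K y : ℝ) ≤ (|ρ| + C) * y := by
  have hC0 : 0 ≤ C := by simpa using (abs_nonneg _).trans (hC 1 one_pos)
  rcases lt_or_ge y 1 with hy1 | hy1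
  · rw [NKcount_eq_zero_of_lt_one hy1, Nat.cast_zero]
    positivity
  have hpow : y ^ (1 - θ) ≤ y := by
    simpa using Real.rpow_le_rpow_of_exponent_le hy1 (by linarith : 1 - θ ≤ 1)
  have := (abs_le.mp (hC y (by linarith))).2
  nlinarith [le_abs_self ρ, mul_le_mul_of_nonneg_left hpow hC0]

theorem summable_absNorm_rpow_neg {C : ℝ} (hC : ∀ y : ℝ, 0 ≤ y → (NKcount K y : ℝ) ≤ C * y)
    {s : ℝ} (hs : 1 < s) :
    Summable fun I : {I : Ideal (𝓞 K) // I ≠ 0} ↦ (absNorm I.1 : ℝ) ^ (-s) := by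
  refine summable_rpow_neg_of_card_le_mul (C := C)
    (fun I : {I : Ideal (𝓞 K) // I ≠ 0} ↦ absNorm I.1)
    (fun I ↦ absNorm_eq_zero_iff.not.mpr I.2) (fun u n hu ↦ ?_) hs
  refine le_trans ?_ (hC n n.cast_nonneg)
  rw [NKcount_eq_card, ← Finset.card_map ⟨_, Subtype.val_injective⟩]
  refine Nat.cast_le.mpr (Finset.card_le_card fun I hI ↦ ?_)
  obtain ⟨J, hJ, rfl⟩ := Finset.mem_map.mp hI
  exact mem_idealsUpTo.mpr ⟨J.2, by exact_mod_cast hu J hJ⟩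

theorem abs_NKcount_pow_sub_le_of_abs_sub_le (hθ0 : 0 ≤ θ) {C : ℝ}
    (hC : ∀ y : ℝ, 0 < y → |(NKcount K y : ℝ) - ρ * y| ≤ C * y ^ (1 - θ))
    {m : ℕ} (hm : m ≠ 0) {y : ℝ} (hy : 0 < y) :
    |(NKcount K y : ℝ) ^ m - (ρ * y) ^ m| ≤
      m * C * (2 * |ρ| + C) ^ (m - 1) * y ^ ((m : ℝ) - θ) := by
  have hC0 : 0 ≤ C := by simpa using (abs_nonneg _).trans (hC 1 one_pos)
  have hmax : max |(NKcount K y : ℝ)| |ρ * y| ≤ (2 * |ρ| + C) * y := by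
    rw [Nat.abs_cast, abs_mul, abs_of_pos hy]
    refine max_le ((NKcount_le_mul_of_abs_sub_le hθ0 hC hy.le).trans ?_) ?_ <;>
      exact mul_le_mul_of_nonneg_right (by linarith [abs_nonneg ρ]) hy.le
  have hexp : y ^ (1 - θ) * y ^ (m - 1) = y ^ ((m : ℝ) - θ) := by
    rw [← Real.rpow_natCast, ← Real.rpow_add hy, Nat.cast_sub (Nat.one_le_iff_ne_zero.mpr hm)]
    ring_nf
  calc |(NKcount K y : ℝ) ^ m - (ρ * y) ^ m|
      ≤ |(NKcount K y : ℝ) - ρ * y| * m * max |(NKcount K y : ℝ)| |ρ * y| ^ (m - 1) :=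
        abs_pow_sub_pow_le _ _ _
    _ ≤ C * y ^ (1 - θ) * m * ((2 * |ρ| + C) * y) ^ (m - 1) := by
        gcongr
        exact hC y hy
    _ = m * C * (2 * |ρ| + C) ^ (m - 1) * y ^ ((m : ℝ) - θ) := by
        rw [← hexp, mul_pow]
        ring

theorem abs_ncard_coprimeTuples_sub_mul_moebiusSeries_le {m : ℕ} (hm : m ≠ 0) {α C x : ℝ}
    (hx : 0 < x) (hC : ∀ y : ℝ, 0 < y → |(NKcount K y : ℝ) ^ m - (ρ * y) ^ m| ≤ C * y ^ α)
    (hα : Summable fun Q : Finset (HeightOneSpectrum (𝓞 K)) ↦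
      (absNorm (primeProd Q) : ℝ) ^ (-α))
    (hsm : Summable fun Q : Finset (HeightOneSpectrum (𝓞 K)) ↦
      (absNorm (primeProd Q) : ℝ) ^ (-(m : ℝ))) :
    |((coprimeTuples K m x).ncard : ℝ) - (ρ * x) ^ m * moebiusSeries K m| ≤
      C * x ^ α * ∑' Q : Finset (HeightOneSpectrum (𝓞 K)), (absNorm (primeProd Q) : ℝ) ^ (-α) := by
  have hn : ∀ Q : Finset (HeightOneSpectrum (𝓞 K)), 0 < (absNorm (primeProd Q) : ℝ) :=
    fun Q ↦ zero_lt_one.trans_le (one_le_absNorm (primeProd_ne_zero Q))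
  have hsigned : Summable fun Q : Finset (HeightOneSpectrum (𝓞 K)) ↦
      (-1) ^ Q.card * (absNorm (primeProd Q) : ℝ) ^ (-(m : ℝ)) :=
    hsm.of_norm_bounded fun Q ↦ by simp
  have hmain : HasSum (fun Q : Finset (HeightOneSpectrum (𝓞 K)) ↦
      (-1) ^ Q.card * (ρ * (x / absNorm (primeProd Q))) ^ m) ((ρ * x) ^ m * moebiusSeries K m) := by
    refine (hsigned.hasSum.mul_left _).congr_fun fun Q ↦ ?_
    rw [Real.rpow_neg (hn Q).le, Real.rpow_natCast, mul_div_assoc', div_pow]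
    field_simp
  refine ((hasSum_ncard_coprimeTuples hm x).sub hmain).norm_le_of_bounded
    (hα.hasSum.mul_left (C * x ^ α)) fun Q ↦ ?_
  rw [← mul_sub, norm_mul, norm_pow, norm_neg, norm_one, one_pow, one_mul, Real.norm_eq_abs,
    mul_assoc, Real.rpow_neg (hn Q).le, ← div_eq_mul_inv, ← Real.div_rpow hx.le (hn Q).le]
  exact hC _ (div_pos hx (hn Q))

theorem abs_ncard_coprimeTuples_sub_le {m : ℕ} (hm : m ≠ 0) {α C x : ℝ} (hx : 0 < x)
    (hC : ∀ y : ℝ, 0 < y → |(NKcount K y : ℝ) ^ m - (ρ * y) ^ m| ≤ C * y ^ α)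
    (hα : Summable fun Q : Finset (HeightOneSpectrum (𝓞 K)) ↦
      (absNorm (primeProd Q) : ℝ) ^ (-α))
    (hsm : Summable fun Q : Finset (HeightOneSpectrum (𝓞 K)) ↦
      (absNorm (primeProd Q) : ℝ) ^ (-(m : ℝ))) :
    |((coprimeTuples K m x).ncard : ℝ) - (NKcount K x : ℝ) ^ m * moebiusSeries K m| ≤
      C * x ^ α * (∑' Q : Finset (HeightOneSpectrum (𝓞 K)), (absNorm (primeProd Q) : ℝ) ^ (-α) +
        |moebiusSeries K m|) := by
  calc |((coprimeTuples K m x).ncard : ℝ) - (NKcount K x : ℝ) ^ m * moebiusSeries K m|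
      = |(((coprimeTuples K m x).ncard : ℝ) - (ρ * x) ^ m * moebiusSeries K m) -
          ((NKcount K x : ℝ) ^ m - (ρ * x) ^ m) * moebiusSeries K m| := by ring_nf
    _ ≤ C * x ^ α * ∑' Q : Finset (HeightOneSpectrum (𝓞 K)), (absNorm (primeProd Q) : ℝ) ^ (-α) +
          C * x ^ α * |moebiusSeries K m| := by
        refine (abs_sub _ _).trans (add_le_add
          (abs_ncard_coprimeTuples_sub_mul_moebiusSeries_le hm hx hC hα hsm) ?_)
        rw [abs_mul]
        gcongr
        exact hC x hx
    _ = _ := by ring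

end Asymptotics

/-- If `N_K(y) = ρ_K y + O(y^{1-θ})` with `θ ∈ (0,1)`, then for every `m ≥ 2` the number of
`m`-tuples of jointly coprime nonzero ideals, each of norm at most `x`, equals
`N_K(x)^m / ζ_K(m) + O_{K,m,ε}(x^{m-θ+ε})`. -/
theorem coprime_tuple_count_asymptotic (K : Type) [Field K] [NumberField K]
    (θ ρ : ℝ) (hθ0 : 0 < θ) (hθ1 : θ < 1)
    (hNK : (fun y : ℝ => (NKcount K y : ℝ) - ρ * y) =O[atTop] fun y : ℝ => y ^ (1 - θ)) :
    ∀ m : ℕ, 2 ≤ m → ∀ ε : ℝ, 0 < ε →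
      (fun x : ℝ =>
          (Set.ncard {f : Fin m → Ideal (𝓞 K) |
              (∀ i, f i ≠ 0 ∧ (absNorm (f i) : ℝ) ≤ x) ∧ (⨆ i, f i) = ⊤} : ℝ)
            - (NKcount K x : ℝ) ^ m / zetaK K m)
        =O[atTop] fun x : ℝ => x ^ ((m : ℝ) - θ + ε) := by
  intro m hm ε hε
  have hm0 : m ≠ 0 := by omega
  have hm2 : (2 : ℝ) ≤ m := by exact_mod_cast hm
  obtain ⟨C₁, hC₁⟩ := exists_abs_NKcount_sub_le hθ0.le hθ1.le hNK
  have hζ : ∀ s : ℝ, 1 < s → Summable fun I : {I : Ideal (𝓞 K) // I ≠ 0} ↦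
      (absNorm I.1 : ℝ) ^ (-s) :=
    fun s ↦ summable_absNorm_rpow_neg fun y ↦ NKcount_le_mul_of_abs_sub_le hθ0.le hC₁
  set Z := ∑' Q : Finset (HeightOneSpectrum (𝓞 K)), (absNorm (primeProd Q) : ℝ) ^ (-(m - θ))
  set C := m * C₁ * (2 * |ρ| + C₁) ^ (m - 1)
  have hC : ∀ y : ℝ, 0 < y → |(NKcount K y : ℝ) ^ m - (ρ * y) ^ m| ≤ C * y ^ ((m : ℝ) - θ) :=
    fun y ↦ abs_NKcount_pow_sub_le_of_abs_sub_le hθ0.le hC₁ hm0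
  have hC0 : 0 ≤ C := by simpa using (abs_nonneg _).trans (hC 1 one_pos)
  have hζm : moebiusSeries K m = (zetaK K m)⁻¹ :=
    eq_inv_of_mul_eq_one_right (zetaK_mul_moebiusSeries (hζ m (by linarith)))
  refine IsBigO.of_bound (C * (Z + |moebiusSeries K m|)) ?_
  filter_upwards [eventually_ge_atTop 1] with x hx
  have hx0 : 0 < x := by linarith
  rw [Real.norm_eq_abs, Real.norm_eq_abs, abs_of_pos (Real.rpow_pos_of_pos hx0 _), div_eq_mul_inv,
    ← hζm, mul_right_comm]
  refine (abs_ncard_coprimeTuples_sub_le hm0 hx0 hC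
    (summable_absNorm_primeProd_rpow_neg (hζ _ (by linarith)))
    (summable_absNorm_primeProd_rpow_neg (hζ m (by linarith)))).trans ?_
  gcongr
  linarith
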